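/- Correctness of the arity-generic selector construction: for all natural numbers n ≥ 1 and 1 ≤ k ≤ n, letting f = λpx.(p (λz.x)), the term obtained by applying K (k−1) times to the (n−k)-fold application of f to I, i.e., (c_{k−1} K ((c_{n−k} f) I)), is βη-equal to the selector σ_k^n = λx_1…x_n.x_k. -/

import Mathlib

namespace LC

/-- Untyped λ-terms, de Bruijn indices. -/
inductive Tm : Type
  | var : ℕ → Tm
  | app : Tm → Tm → Tm
  | lam : Tm → Tm
  deriving DecidableEq

namespace Tm

/-- Shift the free variables ≥ c up by one. -/
def lift (c : ℕ) : Tm → Tm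
  | var n => if n < c then var n else var (n + 1)
  | app a b => app (lift c a) (lift c b)
  | lam a => lam (lift (c + 1) a)

/-- Substitute `s` for the free variable `k`. -/
def subst (k : ℕ) (s : Tm) : Tm → Tm
  | var n => if n = k then s else if k < n then var (n - 1) else var n
  | app a b => app (subst k s a) (subst k s b)
  | lam a => lam (subst (k + 1) (lift 0 s) a)

/-- One-step βη-reduction (with congruence closure). -/
inductive Step : Tm → Tm → Prop
  | beta (a b : Tm) : Step (app (lam a) b) (subst 0 b a)
  | eta (a : Tm) : Step (lam (app (lift 0 a) (var 0))) a
  | appL {a a' : Tm} (b : Tm) : Step a a' → Step (app a b) (app a' b)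
  | appR (a : Tm) {b b' : Tm} : Step b b' → Step (app a b) (app a b')
  | lamCongr {a a' : Tm} : Step a a' → Step (lam a) (lam a')

/-- βη-equivalence: the equivalence relation generated by βη-reduction. -/
def BetaEta : Tm → Tm → Prop := Relation.EqvGen Step

/-- Multi-step βη-reduction: reflexive-transitive closure of βη-reduction. -/
def Reduces : Tm → Tm → Prop := Relation.ReflTransGen Step

/-- I = λx.x -/
def I : Tm := lam (var 0)
/-- K = λxy.x -/
def K : Tm := lam (lam (var 1))
/-- B = λxyz.(x (y z)) -/
def B : Tm := lam (lam (lam (app (var 2) (app (var 1) (var 0)))))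
/-- C = λxyz.(x z y) -/
def C : Tm := lam (lam (lam (app (app (var 2) (var 0)) (var 1))))
/-- S = λxyz.(x z (y z)) -/
def S : Tm := lam (lam (lam (app (app (var 2) (var 0)) (app (var 1) (var 0)))))

/-- body of the n-th Church numeral: s (s ⋯ (s z)⋯), n times. -/
def churchBody : ℕ → Tm
  | 0 => var 0
  | n + 1 => app (var 1) (churchBody n)

/-- The n-th Church numeral c_n = λsz.(s (s ⋯ (s z)⋯)). -/
def church (n : ℕ) : Tm := lam (lam (churchBody n))

/-- n nested λ-abstractions. -/
def lamN : ℕ → Tm → Tm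
  | 0, t => t
  | n + 1, t => lam (lamN n t)

/-- Shift all free variables up by n. -/
def liftN (n : ℕ) (t : Tm) : Tm := (lift 0)^[n] t

/-- t (var (a+k-1)) ⋯ (var (a+1)) (var a) : left-associated application of t
to k variables with descending indices. -/
def appVars (t : Tm) (a k : ℕ) : Tm :=
  ((List.range k).reverse).foldl (fun s i => app s (var (a + i))) t

/-- t (var a) (var (a+1)) ⋯ (var (a+k-1)) : left-associated application of t
to k variables with ascending indices. -/
def appVarsAsc (t : Tm) (a k : ℕ) : Tm :=
  (List.range k).foldl (fun s i => app s (var (a + i))) t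

/-- Left-associated application of t to a list of terms. -/
def appList (t : Tm) (l : List Tm) : Tm := l.foldl app t

/-- K_n = λp x_1…x_n. p -/
def Kn (n : ℕ) : Tm := lamN (n + 1) (var n)
/-- S_n = λpq x_1…x_n.(p x_1⋯x_n (q x_1⋯x_n)) -/
def Sn (n : ℕ) : Tm :=
  lamN (n + 2) (app (appVars (var (n + 1)) 0 n) (appVars (var n) 0 n))
/-- B_n = λpq x_1…x_n.(p (q x_1⋯x_n)) -/
def Bn (n : ℕ) : Tm := lamN (n + 2) (app (var (n + 1)) (appVars (var n) 0 n))
/-- C_n = λpq x_1…x_n.(p x_1⋯x_n q) -/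
def Cn (n : ℕ) : Tm := lamN (n + 2) (app (appVars (var (n + 1)) 0 n) (var n))


/-- The selector σ_k^n = λx_1…x_n.x_k. -/
def sel (k n : ℕ) : Tm := lamN n (var (n - k))

/-!
The numeral `c_m` applied to `g` and `x` reduces to `g (g ⋯ (g x))`. Starting from `I = σ_1^1`,
each application of `f = λpx.(p (λz.x))` turns `σ_1^m` into `σ_1^(m+1)`, since
`f σ_1^m = λx.σ_1^m (λz.x) = λx x_2 ⋯ x_m z.x`; so `c_{n-k} f I` reduces to `σ_1^(n-k+1)`.
Each application of `K` then adds one new leading argument, turning `σ_i^m` into `σ_(i+1)^(m+1)`,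
and `k - 1` of them yield `σ_k^n`.
-/

/-- The combinator `f = λpx.(p (λz.x))`. -/
def selSucc : Tm := lam (lam (app (var 1) (lam (var 1))))

theorem Reduces.app_right (a : Tm) {b b' : Tm} (h : Reduces b b') :
    Reduces (app a b) (app a b') :=
  Relation.ReflTransGen.lift (app a) (fun _ _ s => Step.appR a s) _ _ h

theorem Reduces.iterate_app {g x : Tm} {t : ℕ → Tm} (h₀ : Reduces x (t 0))
    (hstep : ∀ i, Reduces (app g (t i)) (t (i + 1))) (m : ℕ) :
    Reduces ((app g)^[m] x) (t m) := by
  induction m with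
  | zero => exact h₀
  | succ m ih =>
    rw [Function.iterate_succ_apply']
    exact (ih.app_right g).trans (hstep m)

theorem lamN_lam (n : ℕ) (t : Tm) : lamN n (lam t) = lamN (n + 1) t := by
  induction n with
  | zero => rfl
  | succ n ih => simp only [lamN, ih]

theorem liftN_succ (n : ℕ) (t : Tm) : liftN (n + 1) t = liftN n (lift 0 t) :=
  Function.iterate_succ_apply _ _ _

theorem lift_lamN (c n : ℕ) (t : Tm) : lift c (lamN n t) = lamN n (lift (c + n) t) := by
  induction n generalizing c with
  | zero => rfl
  | succ n ih => simp only [lamN, lift, ih, Nat.add_right_comm c 1 n, Nat.add_assoc]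

theorem subst_lamN (k n : ℕ) (s t : Tm) :
    subst k s (lamN n t) = lamN n (subst (k + n) (liftN n s) t) := by
  induction n generalizing k s with
  | zero => rfl
  | succ n ih => simp only [lamN, subst, ih, ← liftN_succ, Nat.add_right_comm k 1 n, Nat.add_assoc]

theorem subst_lift (k : ℕ) (s t : Tm) : subst k s (lift k t) = t := by
  induction t generalizing k s with
  | var n =>
    by_cases h : n < k
    · simp [lift, subst, h, Nat.ne_of_lt h, Nat.not_lt.mpr h.le]
    · simp [lift, subst, h, show n + 1 ≠ k by omega, show k < n + 1 by omega]
  | app a b iha ihb => simp [lift, subst, iha, ihb]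
  | lam a ih => simp [lift, subst, ih]

theorem liftN_lam_var {i : ℕ} (hi : 1 ≤ i) (j : ℕ) : liftN j (lam (var i)) = lam (var (i + j)) := by
  induction j generalizing i with
  | zero => rfl
  | succ j ih =>
    rw [liftN_succ, show lift 0 (lam (var i)) = lam (var (i + 1)) by simp [lift, Nat.not_lt.mpr hi],
      ih (by omega), Nat.add_right_comm, Nat.add_assoc]

theorem subst_churchBody (m : ℕ) (g x : Tm) :
    subst 0 x (subst 1 (lift 0 g) (churchBody m)) = (app g)^[m] x := by
  induction m with
  | zero => simp [churchBody, subst]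
  | succ m ih => simp [churchBody, subst, ih, subst_lift, Function.iterate_succ_apply']

theorem church_app (m : ℕ) (g x : Tm) :
    Reduces (app (app (church m) g) x) ((app g)^[m] x) := by
  have hg : Step (app (app (church m) g) x)
      (app (lam (subst 1 (lift 0 g) (churchBody m))) x) :=
    Step.appL x (Step.beta (lam (churchBody m)) g)
  have hx := Step.beta (subst 1 (lift 0 g) (churchBody m)) x
  rw [subst_churchBody] at hx
  exact .tail (.single hg) hx

theorem K_sel_step {k n : ℕ} (hk : 1 ≤ k) (hkn : k ≤ n) :
    Step (app K (sel k n)) (sel (k + 1) (n + 1)) := by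
  have hvar : lift n (var (n - k)) = var (n - k) := by simp [lift, show n - k < n by omega]
  have h := Step.beta (lam (var 1)) (sel k n)
  simp only [subst, sel, lift_lamN, Nat.zero_add, hvar, if_pos] at h
  rw [sel, sel, Nat.add_sub_add_right]
  exact h

theorem selSucc_sel_one (n : ℕ) : Reduces (app selSucc (sel 1 (n + 1))) (sel 1 (n + 2)) := by
  have hsel : sel 1 (n + 1) = lam (lamN n (var n)) := rfl
  have hout : Step (app selSucc (sel 1 (n + 1)))
      (lam (app (sel 1 (n + 1)) (lam (var 1)))) := by
    have h := Step.beta (lam (app (var 1) (lam (var 1)))) (sel 1 (n + 1))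
    simpa [selSucc, subst, hsel, lift_lamN, lift] using h
  have hin : Step (app (sel 1 (n + 1)) (lam (var 1))) (lamN n (lam (var (n + 1)))) := by
    have h := Step.beta (lamN n (var n)) (lam (var 1))
    rwa [subst_lamN, liftN_lam_var le_rfl, Nat.zero_add, Nat.add_comm 1 n, subst, if_pos rfl,
      ← hsel] at h
  have hres : lam (lamN n (lam (var (n + 1)))) = sel 1 (n + 2) := by
    rw [lamN_lam]; rfl
  exact .tail (.single hout) (hres ▸ hin.lamCongr)

/-- with f = λpx.(p (λz.x)), for 1 ≤ k ≤ n,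
(c_{k-1} K ((c_{n-k} f) I)) =βη σ_k^n. -/
theorem selector_construction (n k : ℕ) (hk : 1 ≤ k) (hkn : k ≤ n) :
    BetaEta
      (app (app (church (k - 1)) K)
        (app (app (church (n - k)) (lam (lam (app (var 1) (lam (var 1)))))) I))
      (sel k n) := by
  have hpad : Reduces (app (app (church (n - k)) selSucc) I) (sel 1 (n - k + 1)) :=
    (church_app _ _ _).trans
      (Reduces.iterate_app (t := fun i => sel 1 (i + 1)) .refl selSucc_sel_one _)
  have hshift := (church_app (k - 1) K _).trans
    (Reduces.iterate_app (t := fun i => sel (1 + i) (n - k + 1 + i)) hpad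
      (fun _ => .single (K_sel_step (by omega) (by omega))) _)
  rw [show 1 + (k - 1) = k by omega, show n - k + 1 + (k - 1) = n by omega] at hshift
  exact Relation.EqvGen.reflTransGen_le_eqvGen _ _ _ hshift

end Tm
end LC
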